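/- arXiv:2508.02164 — 3 statements merged into one kernel-verified Lean document; each statement's English description precedes it below -/
import Mathlib

section
/- Suppose x ∈ ℝ^{np} satisfies Σ_{i=1}^n A_i x_i ⪯ Σ_{i=1}^n d_i componentwise. Then there exist y ∈ ℝ^{nm} and δ ∈ ℝ^{nm} with δ ⪰ 0 such that A x + 𝐋 y + δ − d = 0; i.e., every point feasible for the DRAP extends to a point feasible for the reformulated problem. (The key fact is that any v ∈ ℝ^{nm} whose m-dimensional block-sum Σ_{i=1}^n v_i vanishes lies in the range of 𝐋 = 𝓛 ⊗ I_m.) -/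
set_option autoImplicit false

open scoped BigOperators

noncomputable section

/-- Block-diagonal action `A x` of the stacked matrix `A = blkdiag(A_1,…,A_n)`. -/
def Amul {n m p : ℕ} (A : Fin n → Matrix (Fin m) (Fin p) ℝ)
    (x : EuclideanSpace ℝ (Fin n × Fin p)) : EuclideanSpace ℝ (Fin n × Fin m) :=
  WithLp.toLp 2 (fun q => ∑ k : Fin p, A q.1 q.2 k * x (q.1, k))

/-- Action of `𝐋 = 𝓛 ⊗ I_m` on a stacked vector `u ∈ ℝ^{nm}`. -/
def Lmul {n m : ℕ} (L : Matrix (Fin n) (Fin n) ℝ)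
    (u : EuclideanSpace ℝ (Fin n × Fin m)) : EuclideanSpace ℝ (Fin n × Fin m) :=
  WithLp.toLp 2 (fun q => ∑ l : Fin n, L q.1 l * u (l, q.2))

/-! The slack `∑ᵢ dᵢ - ∑ᵢ Aᵢ xᵢ ⪰ 0` is spread evenly over the agents as `δ`; then every
block sum of `d - A x - δ` vanishes. For a symmetric `𝓛` the range is `(ker 𝓛)ᗮ`, which is the
space of sum-zero vectors since `ker 𝓛` is the constants; applied to each of the `m` coordinates
this puts `d - A x - δ` in the range of `𝐋 = 𝓛 ⊗ I_m`. -/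

theorem LinearMap.IsSymmetric.range_eq_orthogonal_ker {𝕜 E : Type*} [RCLike 𝕜]
    [NormedAddCommGroup E] [InnerProductSpace 𝕜 E] [FiniteDimensional 𝕜 E]
    {T : E →ₗ[𝕜] E} (hT : T.IsSymmetric) : LinearMap.range T = (LinearMap.ker T)ᗮ := by
  rw [← hT.orthogonal_range, Submodule.orthogonal_orthogonal]

theorem Matrix.exists_mulVec_eq_of_sum_eq_zero {ι : Type*} [Fintype ι] [DecidableEq ι]
    {L : Matrix ι ι ℝ} (hL : L.IsSymm)
    (hker : ∀ u : ι → ℝ, L.mulVec u = 0 → ∃ c : ℝ, u = fun _ => c)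
    {v : ι → ℝ} (hv : ∑ i, v i = 0) : ∃ w, L.mulVec w = v := by
  have hT : L.toEuclideanLin.IsSymmetric :=
    isSymmetric_toEuclideanLin_iff.mpr (isHermitian_iff_isSymm.mpr hL)
  have hv_perp : WithLp.toLp 2 v ∈ (LinearMap.ker L.toEuclideanLin)ᗮ := by
    intro u hu
    obtain ⟨c, hc⟩ := hker u.ofLp (by simpa using congrArg WithLp.ofLp hu)
    simp [PiLp.inner_apply, hc, ← Finset.sum_mul, hv]
  rw [← hT.range_eq_orthogonal_ker] at hv_perp
  obtain ⟨w, hw⟩ := hv_perp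
  exact ⟨w.ofLp, by simpa using congrArg WithLp.ofLp hw⟩

theorem exists_Lmul_eq_of_blockSum_eq_zero {n m : ℕ} {L : Matrix (Fin n) (Fin n) ℝ}
    (hL : L.IsSymm) (hker : ∀ u : Fin n → ℝ, L.mulVec u = 0 → ∃ c : ℝ, u = fun _ => c)
    {v : EuclideanSpace ℝ (Fin n × Fin m)} (hv : ∀ j, ∑ i, v (i, j) = 0) :
    ∃ y, Lmul L y = v := by
  choose w hw using fun j => L.exists_mulVec_eq_of_sum_eq_zero hL hker (hv j)
  refine ⟨WithLp.toLp 2 fun q => w q.2 q.1, ?_⟩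
  ext ⟨i, j⟩
  simpa [Lmul, Matrix.mulVec, dotProduct] using congrFun (hw j) i

theorem stmt_1_general {n m p : ℕ} (hn : 1 ≤ n)
    (A : Fin n → Matrix (Fin m) (Fin p) ℝ)
    (d : EuclideanSpace ℝ (Fin n × Fin m))
    (L : Matrix (Fin n) (Fin n) ℝ)
    (hLsym : L.IsSymm)
    (hLker : ∀ v : Fin n → ℝ, L.mulVec v = 0 ↔ ∃ c : ℝ, v = fun _ => c)
    (x : EuclideanSpace ℝ (Fin n × Fin p))
    (hx : ∀ j : Fin m, (∑ i : Fin n, Amul A x (i, j)) ≤ ∑ i : Fin n, d (i, j)) :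
    ∃ (y δ : EuclideanSpace ℝ (Fin n × Fin m)),
      (∀ q, 0 ≤ δ q) ∧ Amul A x + Lmul L y + δ - d = 0 := by
  have hn₀ : (n : ℝ) ≠ 0 := by positivity
  set slack : Fin m → ℝ := fun j => ∑ i, d (i, j) - ∑ i, Amul A x (i, j)
  set δ : EuclideanSpace ℝ (Fin n × Fin m) := WithLp.toLp 2 fun q => slack q.2 / n
  have hδ : ∀ q, 0 ≤ δ q := fun q => div_nonneg (sub_nonneg.mpr (hx q.2)) n.cast_nonneg
  have hδ_sum : ∀ j, ∑ i, δ (i, j) = slack j := fun j => by simp [δ, mul_div_cancel₀ _ hn₀]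
  obtain ⟨y, hy⟩ : ∃ y, Lmul L y = d - Amul A x - δ := by
    refine exists_Lmul_eq_of_blockSum_eq_zero hLsym (fun u => (hLker u).1) fun j => ?_
    simp only [PiLp.sub_apply, Finset.sum_sub_distrib, hδ_sum, slack, sub_self]
  exact ⟨y, δ, hδ, by rw [hy]; abel⟩

/-- every point `x` feasible for the DRAP (`∑ᵢ Aᵢ xᵢ ⪯ ∑ᵢ dᵢ`
componentwise) extends to a point `(x, y, δ)` feasible for the reformulated
problem: there exist `y` and `δ ⪰ 0` such that `A x + 𝐋 y + δ − d = 0`. -/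
theorem stmt_1 {n m p : ℕ} (hn : 1 ≤ n) (hpm : m ≤ p)
    (f : Fin n → EuclideanSpace ℝ (Fin p) → ℝ)
    (hdiff : ∀ i, Differentiable ℝ (f i))
    (hconv : ∀ i, ConvexOn ℝ Set.univ (f i))
    (A : Fin n → Matrix (Fin m) (Fin p) ℝ)
    (hArank : ∀ i, (A i).rank = m)
    (d : EuclideanSpace ℝ (Fin n × Fin m))
    (L : Matrix (Fin n) (Fin n) ℝ)
    (hLsym : L.IsSymm)
    (hLpsd : L.PosSemidef)
    (hLker : ∀ v : Fin n → ℝ, L.mulVec v = 0 ↔ ∃ c : ℝ, v = fun _ => c)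
    (x : EuclideanSpace ℝ (Fin n × Fin p))
    (hx : ∀ j : Fin m, (∑ i : Fin n, Amul A x (i, j)) ≤ ∑ i : Fin n, d (i, j)) :
    ∃ (y δ : EuclideanSpace ℝ (Fin n × Fin m)),
      (∀ q, 0 ≤ δ q) ∧ Amul A x + Lmul L y + δ - d = 0 :=
  stmt_1_general hn A d L hLsym hLker x hx
end
end

section
/- (Theorem 1, part ii) Let γ ∈ (0,1) and ω > 0. Consider sequences x_k ∈ ℝ^{np}, δ_k, y_k ∈ ℝ^{nm} satisfying, for every k ≥ 0, A x_{k+1} = A x_k − γ(A x_k + 𝐋 y_{k+1} + δ_{k+1} − d) + (1−γ)(δ_k − δ_{k+1}), and δ_k ⪰ ω·1 for all k ≥ 1. Suppose at some k₀ ≥ 1 the coupled constraint is violated, and let C ∈ ℝ^m be any componentwise upper bound with Σ_{i=1}^n (A_i x_{i,k₀} + δ_{i,k₀} − d_i) ⪯ C. Then for every integer t ≥ 0 with (1−γ)^t · C ⪯ (nω/(1−γ))·1_m (in particular for every t ≥ ln(nω/‖C‖_∞)/ln(1−γ) when ‖C‖_∞ > nω), the violation is eliminated and stays eliminated: Σ_{i=1}^n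 A_i x_{i,k₀+t+s} ⪯ Σ_{i=1}^n d_i componentwise for all s ≥ 1. Hence the constraint violation decreases to zero in a finite, explicitly bounded number of iterations. -/
set_option autoImplicit false

open scoped BigOperators

noncomputable section

/-!
Summing the update over the agents kills the Laplacian term (its columns sum to zero), so the
aggregate residual `∑ᵢ (Aᵢ xᵢ + δᵢ − dᵢ)` contracts exactly by the factor `1 − γ` at every step.
After `t + s` steps it is at most `(1 − γ)^(t+s) C ≤ nω`, while `∑ᵢ δᵢ ⪰ nω` because `δ ⪰ ω·1`;
subtracting gives `∑ᵢ Aᵢ xᵢ ⪯ ∑ᵢ dᵢ`.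
-/

open Finset

lemma sum_Lmul_apply_eq_zero {n m : ℕ} {L : Matrix (Fin n) (Fin n) ℝ}
    (hLcol : ∀ j, ∑ i, L i j = 0) (u : EuclideanSpace ℝ (Fin n × Fin m)) (j : Fin m) :
    ∑ i, Lmul L u (i, j) = 0 := by
  simp only [Lmul, PiLp.toLp_apply]
  rw [sum_comm]
  simp [← sum_mul, hLcol]

def aggregateResidual {n m p : ℕ} (A : Fin n → Matrix (Fin m) (Fin p) ℝ)
    (d : EuclideanSpace ℝ (Fin n × Fin m)) (x : EuclideanSpace ℝ (Fin n × Fin p))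
    (δ : EuclideanSpace ℝ (Fin n × Fin m)) (j : Fin m) : ℝ :=
  ∑ i, (Amul A x (i, j) + δ (i, j) - d (i, j))

lemma aggregateResidual_succ {n m p : ℕ} {A : Fin n → Matrix (Fin m) (Fin p) ℝ}
    {d : EuclideanSpace ℝ (Fin n × Fin m)} {L : Matrix (Fin n) (Fin n) ℝ}
    (hLcol : ∀ j, ∑ i, L i j = 0) {γ : ℝ} {x : ℕ → EuclideanSpace ℝ (Fin n × Fin p)}
    {y δ : ℕ → EuclideanSpace ℝ (Fin n × Fin m)}
    (hrec : ∀ k : ℕ, Amul A (x (k + 1)) =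
      Amul A (x k) - γ • (Amul A (x k) + Lmul L (y (k + 1)) + δ (k + 1) - d)
        + (1 - γ) • (δ k - δ (k + 1)))
    (k : ℕ) (j : Fin m) :
    aggregateResidual A d (x (k + 1)) (δ (k + 1)) j
      = (1 - γ) * aggregateResidual A d (x k) (δ k) j := by
  have hpt : ∀ i : Fin n,
      Amul A (x (k + 1)) (i, j) + δ (k + 1) (i, j) - d (i, j)
        = (1 - γ) * (Amul A (x k) (i, j) + δ k (i, j) - d (i, j))
          - γ * Lmul L (y (k + 1)) (i, j) := by
    intro i
    rw [congrArg (fun v => v (i, j)) (hrec k)]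
    simp only [PiLp.sub_apply, PiLp.add_apply, PiLp.smul_apply, smul_eq_mul]
    ring
  rw [aggregateResidual, sum_congr rfl fun i _ => hpt i, sum_sub_distrib, ← mul_sum, ← mul_sum,
    sum_Lmul_apply_eq_zero hLcol, aggregateResidual]
  ring

lemma eq_pow_mul_of_forall_succ_eq_mul {M : Type*} [Monoid M] {S : ℕ → M} {c : M}
    (h : ∀ k, S (k + 1) = c * S k) (k₀ r : ℕ) : S (k₀ + r) = c ^ r * S k₀ := by
  induction r with
  | zero => simp
  | succ r ih => rw [← add_assoc, h, ih, pow_succ', mul_assoc]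

lemma pow_add_mul_le_of_pow_mul_le_div {K : Type*} [Field K] [LinearOrder K]
    [IsStrictOrderedRing K] {c B C : K} (hc0 : 0 < c) (hc1 : c ≤ 1) (hB : 0 ≤ B)
    {t s : ℕ} (ht : c ^ t * C ≤ B / c) (hs : 1 ≤ s) : c ^ (t + s) * C ≤ B := by
  obtain ⟨r, rfl⟩ := Nat.exists_eq_add_of_le hs
  calc c ^ (t + (1 + r)) * C = c ^ r * c * (c ^ t * C) := by ring
    _ ≤ c ^ r * c * (B / c) := by gcongr
    _ = c ^ r * B := by field_simp
    _ ≤ B := mul_le_of_le_one_left hB (pow_le_one₀ hc0.le hc1)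

theorem stmt_8_general {n m p : ℕ}
    (A : Fin n → Matrix (Fin m) (Fin p) ℝ)
    (d : EuclideanSpace ℝ (Fin n × Fin m))
    (L : Matrix (Fin n) (Fin n) ℝ)
    (hLcol : ∀ j, ∑ i, L i j = 0)
    (γ ω : ℝ) (hγ0 : 0 < γ) (hγ1 : γ < 1) (hω : 0 < ω)
    (x : ℕ → EuclideanSpace ℝ (Fin n × Fin p))
    (y δ : ℕ → EuclideanSpace ℝ (Fin n × Fin m))
    (hrec : ∀ k : ℕ, Amul A (x (k + 1)) =
      Amul A (x k) - γ • (Amul A (x k) + Lmul L (y (k + 1)) + δ (k + 1) - d)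
        + (1 - γ) • (δ k - δ (k + 1)))
    (hδω : ∀ k : ℕ, 1 ≤ k → ∀ q, ω ≤ δ k q)
    (k₀ : ℕ)
    (C : Fin m → ℝ)
    (hC : ∀ j : Fin m,
      (∑ i : Fin n, (Amul A (x k₀) (i, j) + δ k₀ (i, j) - d (i, j))) ≤ C j) :
    ∀ t : ℕ, (∀ j : Fin m, (1 - γ) ^ t * C j ≤ n * ω / (1 - γ)) →
      ∀ s : ℕ, 1 ≤ s → ∀ j : Fin m,
        (∑ i : Fin n, Amul A (x (k₀ + t + s)) (i, j)) ≤ ∑ i : Fin n, d (i, j) := by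
  intro t ht s hs j
  have hresidual : aggregateResidual A d (x (k₀ + t + s)) (δ (k₀ + t + s)) j ≤ n * ω :=
    calc aggregateResidual A d (x (k₀ + t + s)) (δ (k₀ + t + s)) j
        = (1 - γ) ^ (t + s) * aggregateResidual A d (x k₀) (δ k₀) j := by
          rw [add_assoc]
          exact eq_pow_mul_of_forall_succ_eq_mul
            (S := fun k => aggregateResidual A d (x k) (δ k) j)
            (aggregateResidual_succ hLcol hrec · j) k₀ (t + s)
      _ ≤ (1 - γ) ^ (t + s) * C j := by gcongr; exact hC j
      _ ≤ n * ω := pow_add_mul_le_of_pow_mul_le_div (by linarith) (by linarith)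
          (by positivity) (ht j) hs
  have hδ : (n : ℝ) * ω ≤ ∑ i, δ (k₀ + t + s) (i, j) := by
    simpa using card_nsmul_le_sum univ (fun i => δ (k₀ + t + s) (i, j)) ω
      fun i _ => hδω _ (by omega) (i, j)
  rw [aggregateResidual, sum_sub_distrib, sum_add_distrib] at hresidual
  linarith

/-- Theorem 1, part ii: for `γ ∈ (0,1)`, `ω > 0`, sequences
satisfying the DanyRA decision-update constraint and `δ_k ⪰ ω·1` for `k ≥ 1`,
if `C ∈ ℝ^m` bounds the aggregate `∑ᵢ (Aᵢ x_{i,k₀} + δ_{i,k₀} − dᵢ) ⪯ C` at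
some `k₀ ≥ 1`, then for every `t` with `(1−γ)^t·C ⪯ (nω/(1−γ))·1` the
violation is eliminated and stays eliminated:
`∑ᵢ Aᵢ x_{i,k₀+t+s} ⪯ ∑ᵢ dᵢ` componentwise for all `s ≥ 1`. -/
theorem stmt_8 {n m p : ℕ} (hn : 1 ≤ n)
    (A : Fin n → Matrix (Fin m) (Fin p) ℝ)
    (d : EuclideanSpace ℝ (Fin n × Fin m))
    (L : Matrix (Fin n) (Fin n) ℝ)
    (hLsym : L.IsSymm)
    (hLrow : ∀ i, ∑ j, L i j = 0)
    (hLcol : ∀ j, ∑ i, L i j = 0)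
    (γ ω : ℝ) (hγ0 : 0 < γ) (hγ1 : γ < 1) (hω : 0 < ω)
    (x : ℕ → EuclideanSpace ℝ (Fin n × Fin p))
    (y δ : ℕ → EuclideanSpace ℝ (Fin n × Fin m))
    (hrec : ∀ k : ℕ, Amul A (x (k + 1)) =
      Amul A (x k) - γ • (Amul A (x k) + Lmul L (y (k + 1)) + δ (k + 1) - d)
        + (1 - γ) • (δ k - δ (k + 1)))
    (hδω : ∀ k : ℕ, 1 ≤ k → ∀ q, ω ≤ δ k q)
    (k₀ : ℕ) (hk₀ : 1 ≤ k₀)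
    (C : Fin m → ℝ)
    (hC : ∀ j : Fin m,
      (∑ i : Fin n, (Amul A (x k₀) (i, j) + δ k₀ (i, j) - d (i, j))) ≤ C j) :
    ∀ t : ℕ, (∀ j : Fin m, (1 - γ) ^ t * C j ≤ n * ω / (1 - γ)) →
      ∀ s : ℕ, 1 ≤ s → ∀ j : Fin m,
        (∑ i : Fin n, Amul A (x (k₀ + t + s)) (i, j)) ≤ ∑ i : Fin n, d (i, j) :=
  stmt_8_general A d L hLcol γ ω hγ0 hγ1 hω x y δ hrec hδω k₀ C hC
end
end

section
/- (Theorem 2, part iii) Let γ ∈ (0,1) and let ω_k > 0 be buffers satisfying ω_{k+1} ≥ (1−γ)ω_k for all k. Consider sequences x_k ∈ ℝ^{np}, δ_k, y_k ∈ ℝ^{nm} satisfying, for every k ≥ 0, A x_{k+1} = A x_k − γ(A x_k + 𝐋 y_{k+1} + δ_{k+1} − d) + (1−γ)(δ_k − δ_{k+1}), and δ_{k+1} ⪰ ω_k·1 for all k ≥ 0. If at some k₀ ≥ 1 one has Σ_{i=1}^n (A_i x_{i,k₀} + δ_{i,k₀} − d_i) ⪯ (n ω_{k₀}/(1−γ))·1_m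 componentwise, then the global coupled constraint remains satisfied thereafter: Σ_{i=1}^n A_i x_{i,k₀+t} ⪯ Σ_{i=1}^n d_i componentwise for all t ≥ 1. -/
/-!
Summing the decision update over the agents kills the Laplacian term, since the columns of `𝓛`
sum to zero, and shows that the aggregate slack `∑ᵢ (Aᵢ xᵢ + δᵢ − dᵢ)` contracts by the exact
factor `1 − γ` per step. Hence `t ≥ 1` steps after `k₀` the slack is at most
`(1 − γ)ᵗ n ω_{k₀} / (1 − γ) ≤ n ω_{k₀+t−1}`, by the buffer condition, and this is at most
`∑ᵢ δ_{i,k₀+t}`. Subtracting the buffers leaves `∑ᵢ Aᵢ x_{i,k₀+t} ≤ ∑ᵢ dᵢ`.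
-/

set_option autoImplicit false

open scoped BigOperators

noncomputable section

open Finset

section CoupledConstraint

variable {n m p : ℕ}

lemma sum_Lmul_eq_zero {L : Matrix (Fin n) (Fin n) ℝ} (hLcol : ∀ j, ∑ i, L i j = 0)
    (u : EuclideanSpace ℝ (Fin n × Fin m)) (j : Fin m) :
    ∑ i : Fin n, Lmul L u (i, j) = 0 := by
  simp only [Lmul, PiLp.toLp_apply]
  rw [sum_comm]
  simp [← sum_mul, hLcol]

def slack (A : Fin n → Matrix (Fin m) (Fin p) ℝ) (d : EuclideanSpace ℝ (Fin n × Fin m))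
    (x : EuclideanSpace ℝ (Fin n × Fin p)) (δ : EuclideanSpace ℝ (Fin n × Fin m))
    (j : Fin m) : ℝ :=
  ∑ i : Fin n, (Amul A x (i, j) + δ (i, j) - d (i, j))

lemma slack_eq (A : Fin n → Matrix (Fin m) (Fin p) ℝ) (d : EuclideanSpace ℝ (Fin n × Fin m))
    (x : EuclideanSpace ℝ (Fin n × Fin p)) (δ : EuclideanSpace ℝ (Fin n × Fin m))
    (j : Fin m) :
    slack A d x δ j =
      ∑ i : Fin n, Amul A x (i, j) + ∑ i : Fin n, δ (i, j) - ∑ i : Fin n, d (i, j) := by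
  simp only [slack, sum_add_distrib, sum_sub_distrib]

lemma slack_update_eq {A : Fin n → Matrix (Fin m) (Fin p) ℝ} {d : EuclideanSpace ℝ (Fin n × Fin m)}
    {L : Matrix (Fin n) (Fin n) ℝ} (hLcol : ∀ j, ∑ i, L i j = 0) {γ : ℝ}
    {x x' : EuclideanSpace ℝ (Fin n × Fin p)} {y δ δ' : EuclideanSpace ℝ (Fin n × Fin m)}
    (hx' : Amul A x' = Amul A x - γ • (Amul A x + Lmul L y + δ' - d) + (1 - γ) • (δ - δ'))
    (j : Fin m) :
    slack A d x' δ' j = (1 - γ) * slack A d x δ j := by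
  have hsum : ∑ i : Fin n, Amul A x' (i, j) =
      ∑ i : Fin n, (Amul A x (i, j) - γ * (Amul A x (i, j) + Lmul L y (i, j) + δ' (i, j) - d (i, j))
        + (1 - γ) * (δ (i, j) - δ' (i, j))) := by
    simp [hx']
  have hL := sum_Lmul_eq_zero hLcol y j
  simp only [slack_eq, hsum, sum_add_distrib, sum_sub_distrib, ← mul_sum] at hL ⊢
  rw [hL]
  ring

end CoupledConstraint

theorem stmt_14_general {n m p : ℕ}
    (A : Fin n → Matrix (Fin m) (Fin p) ℝ)
    (d : EuclideanSpace ℝ (Fin n × Fin m))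
    (L : Matrix (Fin n) (Fin n) ℝ)
    (hLcol : ∀ j, ∑ i, L i j = 0)
    (γ : ℝ) (hγ1 : γ < 1)
    (ω : ℕ → ℝ)
    (hωdec : ∀ k, (1 - γ) * ω k ≤ ω (k + 1))
    (x : ℕ → EuclideanSpace ℝ (Fin n × Fin p))
    (y δ : ℕ → EuclideanSpace ℝ (Fin n × Fin m))
    (hrec : ∀ k : ℕ, Amul A (x (k + 1)) =
      Amul A (x k) - γ • (Amul A (x k) + Lmul L (y (k + 1)) + δ (k + 1) - d)
        + (1 - γ) • (δ k - δ (k + 1)))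
    (hδω : ∀ k : ℕ, ∀ q, ω k ≤ δ (k + 1) q)
    (k₀ : ℕ)
    (hsmall : ∀ j : Fin m,
      (∑ i : Fin n, (Amul A (x k₀) (i, j) + δ k₀ (i, j) - d (i, j)))
        ≤ n * ω k₀ / (1 - γ)) :
    ∀ t : ℕ, 1 ≤ t → ∀ j : Fin m,
      (∑ i : Fin n, Amul A (x (k₀ + t)) (i, j)) ≤ ∑ i : Fin n, d (i, j) := by
  intro t ht j
  obtain ⟨s, rfl⟩ : ∃ s, t = s + 1 := ⟨t - 1, by omega⟩
  have hc : 0 ≤ 1 - γ := by linarith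
  have hslack : slack A d (x (k₀ + (s + 1))) (δ (k₀ + (s + 1))) j ≤
      (1 - γ) ^ (s + 1) * slack A d (x k₀) (δ k₀) j :=
    le_geom (u := fun t => slack A d (x (k₀ + t)) (δ (k₀ + t)) j) hc (s + 1)
      fun t _ => (slack_update_eq hLcol (hrec (k₀ + t)) j).le
  have hbuffer : (1 - γ) ^ s * ω k₀ ≤ ω (k₀ + s) :=
    geom_le (u := fun t => ω (k₀ + t)) hc s fun t _ => hωdec (k₀ + t)
  have hδsum : ∑ _i : Fin n, ω (k₀ + s) ≤ ∑ i : Fin n, δ (k₀ + (s + 1)) (i, j) :=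
    sum_le_sum fun i _ => hδω (k₀ + s) (i, j)
  have hstart : (1 - γ) ^ (s + 1) * slack A d (x k₀) (δ k₀) j ≤ n * ((1 - γ) ^ s * ω k₀) := by
    calc (1 - γ) ^ (s + 1) * slack A d (x k₀) (δ k₀) j
        ≤ (1 - γ) ^ (s + 1) * (n * ω k₀ / (1 - γ)) := by gcongr; exact hsmall j
      _ = n * ((1 - γ) ^ s * ω k₀) := by field_simp [show 1 - γ ≠ 0 by linarith]; ring
  rw [slack_eq] at hslack
  simp only [sum_const, card_univ, Fintype.card_fin, nsmul_eq_mul] at hδsum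
  linarith [mul_le_mul_of_nonneg_left hbuffer (Nat.cast_nonneg (α := ℝ) n)]

/-- Theorem 2, part iii: for `γ ∈ (0,1)` and buffers `ω_k > 0`
with `ω_{k+1} ≥ (1−γ)ω_k`, sequences satisfying the DanyRA decision-update
constraint and `δ_{k+1} ⪰ ω_k·1`, if at some `k₀ ≥ 1`
`∑ᵢ (Aᵢ x_{i,k₀} + δ_{i,k₀} − dᵢ) ⪯ (n ω_{k₀}/(1−γ))·1`, then the global
coupled constraint remains satisfied thereafter:
`∑ᵢ Aᵢ x_{i,k₀+t} ⪯ ∑ᵢ dᵢ` componentwise for all `t ≥ 1`. -/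
theorem stmt_14 {n m p : ℕ} (hn : 1 ≤ n)
    (A : Fin n → Matrix (Fin m) (Fin p) ℝ)
    (d : EuclideanSpace ℝ (Fin n × Fin m))
    (L : Matrix (Fin n) (Fin n) ℝ)
    (hLsym : L.IsSymm)
    (hLrow : ∀ i, ∑ j, L i j = 0)
    (hLcol : ∀ j, ∑ i, L i j = 0)
    (γ : ℝ) (hγ0 : 0 < γ) (hγ1 : γ < 1)
    (ω : ℕ → ℝ) (hω : ∀ k, 0 < ω k)
    (hωdec : ∀ k, (1 - γ) * ω k ≤ ω (k + 1))
    (x : ℕ → EuclideanSpace ℝ (Fin n × Fin p))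
    (y δ : ℕ → EuclideanSpace ℝ (Fin n × Fin m))
    (hrec : ∀ k : ℕ, Amul A (x (k + 1)) =
      Amul A (x k) - γ • (Amul A (x k) + Lmul L (y (k + 1)) + δ (k + 1) - d)
        + (1 - γ) • (δ k - δ (k + 1)))
    (hδω : ∀ k : ℕ, ∀ q, ω k ≤ δ (k + 1) q)
    (k₀ : ℕ) (hk₀ : 1 ≤ k₀)
    (hsmall : ∀ j : Fin m,
      (∑ i : Fin n, (Amul A (x k₀) (i, j) + δ k₀ (i, j) - d (i, j)))
        ≤ n * ω k₀ / (1 - γ)) :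
    ∀ t : ℕ, 1 ≤ t → ∀ j : Fin m,
      (∑ i : Fin n, Amul A (x (k₀ + t)) (i, j)) ≤ ∑ i : Fin n, d (i, j) :=
  stmt_14_general A d L hLcol γ hγ1 ω hωdec x y δ hrec hδω k₀ hsmall
end
end
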